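/- arXiv:2403.01303 — 4 statements merged into one kernel-verified Lean document; each statement's English description precedes it below -/
import Mathlib

section
/- If |F| > 2, then for any two vertices a, b of the unitary Cayley graph C_{T_n(F)} there exists a vertex c adjacent to both a and b; in particular the graph is connected. -/
/-!
Given `a` and `b`, pick a diagonal matrix `D = diag λ` with every `λᵢ ∉ {0, bᵢᵢ - aᵢᵢ}`;
this needs `|F| > 2`. Then `c = a + D` works: `c - a = D` and `c - b` are upper triangular
with nonzero diagonal, hence invertible inside `T_n(F)` (the inverse of an upper triangular matrix is again upper
triangular).
-/

open Matrix

/-- The subring of upper triangular `n × n` matrices over `F`. -/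
def upperTri (F : Type) [Field F] (n : ℕ) : Subring (Matrix (Fin n) (Fin n) F) where
  carrier := {M | M.BlockTriangular id}
  zero_mem' := Matrix.blockTriangular_zero
  one_mem' := Matrix.blockTriangular_one
  add_mem' := fun ha hb => ha.add hb
  mul_mem' := fun ha hb => ha.mul hb
  neg_mem' := fun ha => ha.neg

/-- The unitary Cayley graph of the ring `T_n(F)`. -/
def cayley (F : Type) [Field F] (n : ℕ) : SimpleGraph (upperTri F n) where
  Adj x y := x ≠ y ∧ IsUnit (x - y)
  symm := ⟨by
    intro x y ⟨hne, hu⟩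
    exact ⟨hne.symm, by simpa using hu.neg⟩⟩
  loopless := ⟨fun x h => h.1 rfl⟩

theorem Fintype.exists_ne_ne_of_two_lt_card {α : Type*} [Fintype α] (h : 2 < Fintype.card α)
    (a b : α) : ∃ c, c ≠ a ∧ c ≠ b := by
  classical
  have hcard : ({a, b} : Finset α).card < (Finset.univ : Finset α).card :=
    (Finset.card_le_two).trans_lt h
  obtain ⟨c, -, hc⟩ := Finset.exists_mem_notMem_of_card_lt_card hcard
  simp only [Finset.mem_insert, Finset.mem_singleton, not_or] at hc
  exact ⟨c, hc⟩

theorem SimpleGraph.connected_of_exists_common_adj {V : Type*} [Nonempty V]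
    {G : SimpleGraph V} (h : ∀ a b, ∃ c, G.Adj c a ∧ G.Adj c b) : G.Connected := by
  refine ⟨fun a b => ?_⟩
  obtain ⟨c, hca, hcb⟩ := h a b
  exact hca.symm.reachable.trans hcb.reachable

namespace upperTri

variable {F : Type} [Field F] {n : ℕ}

theorem isUnit_of_diag_ne_zero (M : upperTri F n) (h : ∀ i, M.1 i i ≠ 0) : IsUnit M := by
  have hdet : IsUnit M.1.det := by
    rw [det_of_isUpperTriangular M.2]
    exact (Finset.prod_ne_zero_iff.2 fun i _ => h i).isUnit
  have : Invertible M.1 := invertibleOfIsUnitDet _ hdet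
  let Minv : upperTri F n := ⟨_, blockTriangular_inv_of_blockTriangular M.2⟩
  exact isUnit_iff_exists.2
    ⟨Minv, Subtype.ext (mul_nonsing_inv _ hdet), Subtype.ext (nonsing_inv_mul _ hdet)⟩

end upperTri

section cayley

variable {F : Type} [Field F] {n : ℕ}

theorem cayley_adj_of_isUnit [NeZero n] {x y : upperTri F n} (h : IsUnit (x - y)) :
    (cayley F n).Adj x y :=
  ⟨fun hxy => h.ne_zero (sub_eq_zero.2 hxy), h⟩

theorem exists_common_cayley_adj [Fintype F] [NeZero n] (hF : 2 < Fintype.card F)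
    (a b : upperTri F n) : ∃ c, (cayley F n).Adj c a ∧ (cayley F n).Adj c b := by
  choose lam hlam_ne_zero hlam_ne using fun i : Fin n =>
    Fintype.exists_ne_ne_of_two_lt_card hF 0 (b.1 i i - a.1 i i)
  let D : upperTri F n := ⟨diagonal lam, blockTriangular_diagonal lam⟩
  refine ⟨a + D, cayley_adj_of_isUnit ?_, cayley_adj_of_isUnit ?_⟩
  · rw [add_sub_cancel_left]
    exact upperTri.isUnit_of_diag_ne_zero D fun i => by simpa [D] using hlam_ne_zero i
  · refine upperTri.isUnit_of_diag_ne_zero _ fun i hi => hlam_ne i ?_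
    simp only [AddSubgroupClass.coe_sub, Subring.coe_add, Matrix.sub_apply, Matrix.add_apply,
      diagonal_apply_eq, D] at hi
    linear_combination hi

end cayley

/-- If `|F| > 2`, any two vertices of `C_{T_n(F)}` have a common neighbor; in
particular the graph is connected. -/
theorem stmt4 (F : Type) [Field F] [Fintype F] (n : ℕ) (hn : 0 < n)
    (hF : 2 < Fintype.card F) :
    (∀ a b : upperTri F n, ∃ c : upperTri F n,
        (cayley F n).Adj c a ∧ (cayley F n).Adj c b) ∧
      (cayley F n).Connected := by
  have : NeZero n := ⟨hn.ne'⟩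
  have common := exists_common_cayley_adj (n := n) hF
  exact ⟨common, SimpleGraph.connected_of_exists_common_adj common⟩
end

section
/- In C_{T_n(F)}, any clique has cardinality at most |F|, and the set of scalar matrices {λ·I : λ ∈ F} forms a clique of size |F|. -/
open Matrix

/-! A unit of `T_n(F)` has nonzero determinant, the product of its diagonal entries, so adjacent
vertices differ in every diagonal entry and a clique injects into `F` via its `(0, 0)` entry.
The scalar matrices are the image of a ring hom out of the field `F`, and such an image is a
clique because `f c - f d = f (c - d)`. -/

theorem Matrix.IsUpperTriangular.isUnit_apply_self {m R : Type*} [Fintype m] [DecidableEq m]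
    [LinearOrder m] [CommRing R] {M : Matrix m m R} (hM : M.IsUpperTriangular) (hu : IsUnit M)
    (i : m) : IsUnit (M i i) := by
  have hdet : IsUnit (∏ j, M j j) := det_of_isUpperTriangular hM ▸ hu.map detMonoidHom
  exact IsUnit.prod_univ_iff.mp hdet i

theorem upperTri.apply_self_ne_zero_of_isUnit {F : Type} [Field F] {n : ℕ} {x : upperTri F n}
    (hx : IsUnit x) (i : Fin n) : (x : Matrix (Fin n) (Fin n) F) i i ≠ 0 :=
  (IsUpperTriangular.isUnit_apply_self x.2 (hx.map (upperTri F n).subtype) i).ne_zero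

theorem cayley.apply_self_ne_of_adj {F : Type} [Field F] {n : ℕ} {x y : upperTri F n}
    (h : (cayley F n).Adj x y) (i : Fin n) :
    (x : Matrix (Fin n) (Fin n) F) i i ≠ (y : Matrix (Fin n) (Fin n) F) i i :=
  sub_ne_zero.mp (upperTri.apply_self_ne_zero_of_isUnit h.2 i)

theorem cayley.card_le_of_isClique {F : Type} [Field F] [Fintype F] {n : ℕ} (hn : 0 < n)
    {s : Finset (upperTri F n)} (hs : (cayley F n).IsClique (s : Set (upperTri F n))) :
    s.card ≤ Fintype.card F := by
  let i : Fin n := ⟨0, hn⟩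
  have hinj : Set.InjOn (fun x : upperTri F n => (x : Matrix (Fin n) (Fin n) F) i i) s :=
    fun x hx y hy hxy => by_contra fun hne => cayley.apply_self_ne_of_adj (hs hx hy hne) i hxy
  simpa using Finset.card_le_card_of_injOn _ (fun _ _ => Finset.mem_univ _) hinj

def upperTri.scalar (F : Type) [Field F] (n : ℕ) : F →+* upperTri F n :=
  (Matrix.scalar (Fin n)).codRestrict (upperTri F n) fun _ => blockTriangular_diagonal _

theorem upperTri.scalar_eq (F : Type) [Field F] (n : ℕ) :
    upperTri.scalar F n =
      fun c : F => (⟨diagonal fun _ => c, blockTriangular_diagonal _⟩ : upperTri F n) :=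
  rfl

theorem cayley.isClique_range_of_ringHom {F : Type} [Field F] {n : ℕ} (f : F →+* upperTri F n) :
    (cayley F n).IsClique (Set.range f) := by
  rintro _ ⟨c, rfl⟩ _ ⟨d, rfl⟩ hne
  have hcd : c - d ≠ 0 := sub_ne_zero.mpr fun h => hne (congrArg f h)
  exact ⟨hne, map_sub f c d ▸ hcd.isUnit.map f⟩

theorem stmt12_general (F : Type) [Field F] [Fintype F] (n : ℕ) (hn : 0 < n) :
    (∀ s : Finset (upperTri F n),
        (cayley F n).IsClique (s : Set (upperTri F n)) → s.card ≤ Fintype.card F) ∧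
    (cayley F n).IsClique
      (Set.range fun c : F =>
        (⟨Matrix.diagonal fun _ => c, Matrix.blockTriangular_diagonal _⟩ : upperTri F n)) ∧
    Nat.card
      (Set.range fun c : F =>
        (⟨Matrix.diagonal fun _ => c, Matrix.blockTriangular_diagonal _⟩ : upperTri F n)) =
      Fintype.card F := by
  have : Nonempty (Fin n) := ⟨⟨0, hn⟩⟩
  rw [← upperTri.scalar_eq]
  refine ⟨fun s hs => cayley.card_le_of_isClique hn hs, cayley.isClique_range_of_ringHom _, ?_⟩
  rw [Nat.card_range_of_injective (upperTri.scalar F n).injective, Nat.card_eq_fintype_card]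

/-- Any clique of `C_{T_n(F)}` has at most `|F|` elements, and the set of scalar
matrices `{λ·I : λ ∈ F}` is a clique of size `|F|`. -/
theorem stmt12 (F : Type) [Field F] [Fintype F] [DecidableEq F] (n : ℕ) (hn : 0 < n) :
    (∀ s : Finset (upperTri F n),
        (cayley F n).IsClique (s : Set (upperTri F n)) → s.card ≤ Fintype.card F) ∧
    (cayley F n).IsClique
      (Set.range fun c : F =>
        (⟨Matrix.diagonal fun _ => c, Matrix.blockTriangular_diagonal _⟩ : upperTri F n)) ∧
    Nat.card
      (Set.range fun c : F =>
        (⟨Matrix.diagonal fun _ => c, Matrix.blockTriangular_diagonal _⟩ : upperTri F n)) =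
      Fintype.card F :=
  stmt12_general F n hn
end

section
/- For |F| = p^k > 2, the unitary Cayley graph C_{T_n(F)} is isomorphic to the semistrong product K_m • A(H(n, p^k)), where m = p^{kn(n−1)/2}, K_m is the complete graph on m vertices, and A(H(n,q)) is the graph on F^n where two n-tuples are adjacent iff they differ in every coordinate. -/
open Matrix

/-- The semistrong product `G • H`: `(u₁, v₁) ~ (u₂, v₂)` iff `v₁ ~_H v₂` and
(`u₁ ~_G u₂` or `u₁ = u₂`). -/
def semistrongProd {α β : Type} (G : SimpleGraph α) (H : SimpleGraph β) :
    SimpleGraph (α × β) where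
  Adj x y := H.Adj x.2 y.2 ∧ (G.Adj x.1 y.1 ∨ x.1 = y.1)
  symm := ⟨fun x y ⟨h1, h2⟩ => ⟨h1.symm, h2.imp (fun h => h.symm) (fun h => h.symm)⟩⟩
  loopless := ⟨fun x h => H.loopless.irrefl _ h.1⟩

/-- The antipodal graph of the Hamming graph `H(n, |S|)`: vertices are `n`-tuples
over `S`, adjacent iff they differ in every coordinate. -/
def antipodalHamming (S : Type) (n : ℕ) : SimpleGraph (Fin n → S) where
  Adj u v := u ≠ v ∧ ∀ i, u i ≠ v i
  symm := ⟨fun u v ⟨h1, h2⟩ => ⟨h1.symm, fun i => (h2 i).symm⟩⟩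
  loopless := ⟨fun u h => h.1 rfl⟩

/-! An upper triangular matrix is a unit iff its diagonal entries are nonzero, so `x - y` is a
unit iff the diagonals of `x` and `y` differ in every coordinate. Adjacency in `C_{T_n(F)}` thus
depends only on the diagonals, which are the vertices of `A(H(n, |F|))`, while the `n(n-1)/2`
free entries above the diagonal form a complete factor: that is all `semistrongProd ⊤` adds. -/

section SemistrongProd

variable {α β V : Type}

@[simp]
lemma semistrongProd_top_adj (H : SimpleGraph β) (x y : α × β) :
    (semistrongProd (⊤ : SimpleGraph α) H).Adj x y ↔ H.Adj x.2 y.2 := by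
  simp only [semistrongProd, SimpleGraph.top_adj, ne_eq, and_iff_left_iff_imp]
  exact fun _ => em' _

def isoSemistrongProdTopOfAdjIff (G : SimpleGraph V) (H : SimpleGraph β) (e : V ≃ α × β)
    (hadj : ∀ x y, G.Adj x y ↔ H.Adj (e x).2 (e y).2) :
    G ≃g semistrongProd (⊤ : SimpleGraph α) H :=
  ⟨e, fun {x y} => (semistrongProd_top_adj H (e x) (e y)).trans (hadj x y).symm⟩

end SemistrongProd

namespace upperTri

variable {F : Type} [Field F] {n : ℕ}

abbrev StrictUpperIdx (n : ℕ) := {p : Fin n × Fin n // p.1 < p.2}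

lemma card_strictUpperIdx (n : ℕ) : Fintype.card (StrictUpperIdx n) = n * (n - 1) / 2 := by
  rw [Fintype.card_subtype, Fintype.card_product_filter_lt, Fintype.card_fin,
    Nat.choose_two_right]

variable (F n) in
def equivStrictUpperDiag : upperTri F n ≃ (StrictUpperIdx n → F) × (Fin n → F) where
  toFun M := (fun p => M.1 p.1.1 p.1.2, fun i => M.1 i i)
  invFun x := ⟨Matrix.of fun i j =>
      if h : i < j then x.1 ⟨(i, j), h⟩ else if i = j then x.2 i else 0, by
    intro i j (hji : j < i)
    simp only [Matrix.of_apply, dif_neg hji.not_gt, if_neg hji.ne']⟩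
  left_inv M := by
    ext i j
    simp only [Matrix.of_apply]
    rcases lt_trichotomy i j with h | rfl | h
    · rw [dif_pos h]
    · rw [dif_neg (lt_irrefl i), if_pos rfl]
    · rw [dif_neg h.not_gt, if_neg h.ne']
      exact (M.2 h).symm
  right_inv x := by
    ext p
    · simp only [Matrix.of_apply, dif_pos p.2]
    · simp only [Matrix.of_apply, dif_neg (lt_irrefl _), if_true]

lemma isUnit_iff_diag_ne_zero (M : upperTri F n) : IsUnit M ↔ ∀ i, M.1 i i ≠ 0 := by
  have hdet : IsUnit M.1.det ↔ ∀ i, M.1 i i ≠ 0 := by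
    rw [Matrix.det_of_isUpperTriangular M.2, isUnit_iff_ne_zero, Finset.prod_ne_zero_iff]
    simp only [Finset.mem_univ, true_implies]
  rw [← hdet]
  refine ⟨fun h => (h.map (upperTri F n).subtype).map Matrix.detMonoidHom, fun h => ?_⟩
  have : Invertible M.1 := M.1.invertibleOfIsUnitDet h
  refine isUnit_iff_exists.mpr
    ⟨⟨M.1⁻¹, blockTriangular_inv_of_blockTriangular M.2⟩, ?_, ?_⟩
  · exact Subtype.ext (Matrix.mul_nonsing_inv _ h)
  · exact Subtype.ext (Matrix.nonsing_inv_mul _ h)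

lemma ne_iff_diag_ne {x y : upperTri F n} (hdiag : ∀ i, x.1 i i ≠ y.1 i i) :
    x ≠ y ↔ (fun i => x.1 i i) ≠ fun i => y.1 i i := by
  refine ⟨fun hne heq => ?_, fun hne heq => hne (heq ▸ rfl)⟩
  rcases isEmpty_or_nonempty (Fin n) with _ | ⟨⟨i⟩⟩
  · exact hne (Subsingleton.elim x y)
  · exact hdiag i (congrFun heq i)

end upperTri

open upperTri in
lemma cayley_adj_iff {F : Type} [Field F] {n : ℕ} (x y : upperTri F n) :
    (cayley F n).Adj x y ↔
      (antipodalHamming F n).Adj (equivStrictUpperDiag F n x).2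
        (equivStrictUpperDiag F n y).2 := by
  change x ≠ y ∧ IsUnit (x - y) ↔ _ ∧ ∀ i, x.1 i i ≠ y.1 i i
  have hunit : IsUnit (x - y) ↔ ∀ i, x.1 i i ≠ y.1 i i := by
    simp only [isUnit_iff_diag_ne_zero, AddSubgroupClass.coe_sub, Matrix.sub_apply, ne_eq,
      sub_eq_zero]
  rw [hunit]
  exact ⟨fun ⟨hne, hdiag⟩ => ⟨(ne_iff_diag_ne hdiag).mp hne, hdiag⟩,
    fun ⟨hne, hdiag⟩ => ⟨(ne_iff_diag_ne hdiag).mpr hne, hdiag⟩⟩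

theorem stmt13_general (F : Type) [Field F] [Fintype F] (p k n : ℕ)
    (hcard : Fintype.card F = p ^ k) :
    Nonempty
      ((cayley F n) ≃g
        semistrongProd (⊤ : SimpleGraph (Fin (p ^ (k * (n * (n - 1) / 2)))))
          (antipodalHamming F n)) := by
  have hcardUpper :
      Fintype.card (upperTri.StrictUpperIdx n → F) = p ^ (k * (n * (n - 1) / 2)) := by
    rw [Fintype.card_fun, hcard, upperTri.card_strictUpperIdx, ← pow_mul]
  let e := (upperTri.equivStrictUpperDiag F n).trans
    ((Fintype.equivFinOfCardEq hcardUpper).prodCongr (Equiv.refl _))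
  exact ⟨isoSemistrongProdTopOfAdjIff _ _ e cayley_adj_iff⟩

/-- For `|F| = p^k > 2`, the unitary Cayley graph `C_{T_n(F)}` is isomorphic to the
semistrong product `K_m • A(H(n, p^k))` with `m = p^(k·n(n-1)/2)`. -/
theorem stmt13 (F : Type) [Field F] [Fintype F] (p k n : ℕ) (hp : p.Prime)
    (hcard : Fintype.card F = p ^ k) (hgt : 2 < p ^ k) (hn : 0 < n) :
    Nonempty
      ((cayley F n) ≃g
        semistrongProd (⊤ : SimpleGraph (Fin (p ^ (k * (n * (n - 1) / 2)))))
          (antipodalHamming F n)) :=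
  stmt13_general F p k n hcard
end

section
/- The map sending an upper triangular matrix a to the pair (strictly upper triangular part of a, diagonal vector of a) is a graph isomorphism from C_{T_n(F)} to the graph on N × F^n (N = strictly upper triangular matrices) where (x,u) ~ (y,v) iff u_i ≠ v_i for all i, provided |F| > 2. -/
/-!
An upper triangular matrix over a field has determinant the product of its diagonal entries,
and its inverse, when it exists, is again upper triangular. Hence `a - b` is a unit of `T_n(F)`
exactly when `a` and `b` differ in every diagonal entry, which is the adjacency of the target graph
transported along the splitting of `a` into its strictly upper part and its diagonal.
-/

open Matrix

/-- Strictly upper triangular `n × n` matrices over `F`. -/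
def strictUpper (F : Type) [Field F] (n : ℕ) : Type :=
  {M : Matrix (Fin n) (Fin n) F // ∀ i j : Fin n, j ≤ i → M i j = 0}

/-- The graph on `N × F^n` (`N` = strictly upper triangular matrices) where
`(x, u) ~ (y, v)` iff `u i ≠ v i` for all `i`; this is exactly
`K_m • A(H(n, |F|))`. -/
def targetGraph (F : Type) [Field F] (n : ℕ) [NeZero n] :
    SimpleGraph (strictUpper F n × (Fin n → F)) where
  Adj x y := ∀ i, x.2 i ≠ y.2 i
  symm := ⟨fun x y h i => (h i).symm⟩
  loopless := ⟨fun x h => h ⟨0, Nat.pos_of_ne_zero (NeZero.ne n)⟩ rfl⟩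

namespace upperTri

variable {F : Type} [Field F] {n : ℕ}

lemma isUnit_coe_iff (x : upperTri F n) :
    IsUnit (x : Matrix (Fin n) (Fin n) F) ↔ IsUnit x := by
  refine ⟨fun hx => ?_, fun hx => hx.map (upperTri F n).subtype⟩
  have hdet := (Matrix.isUnit_iff_isUnit_det _).mp hx
  have := Matrix.invertibleOfIsUnitDet _ hdet
  have hinv : (x : Matrix (Fin n) (Fin n) F)⁻¹ ∈ upperTri F n :=
    Matrix.blockTriangular_inv_of_blockTriangular x.2
  exact ⟨⟨x, ⟨_, hinv⟩, Subtype.ext (Matrix.mul_nonsing_inv _ hdet),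
    Subtype.ext (Matrix.nonsing_inv_mul _ hdet)⟩, rfl⟩

lemma isUnit_iff (x : upperTri F n) :
    IsUnit x ↔ ∀ i, (x : Matrix (Fin n) (Fin n) F) i i ≠ 0 := by
  rw [← isUnit_coe_iff, Matrix.isUnit_iff_isUnit_det, Matrix.det_of_isUpperTriangular x.2,
    isUnit_iff_ne_zero, Finset.prod_ne_zero_iff]
  simp

end upperTri

lemma cayley_adj_iff_s14 {F : Type} [Field F] {n : ℕ} [NeZero n] (a b : upperTri F n) :
    (cayley F n).Adj a b ↔
      ∀ i, (a : Matrix (Fin n) (Fin n) F) i i ≠ (b : Matrix (Fin n) (Fin n) F) i i := by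
  have hunit : IsUnit (a - b) ↔
      ∀ i, (a : Matrix (Fin n) (Fin n) F) i i ≠ (b : Matrix (Fin n) (Fin n) F) i i := by
    simp [upperTri.isUnit_iff, sub_ne_zero]
  refine ⟨fun h => hunit.mp h.2, fun h => ⟨?_, hunit.mpr h⟩⟩
  rintro rfl
  exact h 0 rfl

def splitDiagEquiv (F : Type) [Field F] (n : ℕ) :
    upperTri F n ≃ strictUpper F n × (Fin n → F) where
  toFun a :=
    (⟨fun i j => if i < j then (a : Matrix (Fin n) (Fin n) F) i j else 0,
        fun i j hji => if_neg (fun hij => absurd hij (not_lt.mpr hji))⟩,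
     fun i => (a : Matrix (Fin n) (Fin n) F) i i)
  invFun p := ⟨fun i j => if i = j then p.2 i else p.1.1 i j, fun i j (hji : j < i) => by
    simpa [hji.ne'] using p.1.2 i j hji.le⟩
  left_inv a := by
    ext i j
    rcases lt_trichotomy i j with hij | rfl | hij
    · simp [hij, hij.ne]
    · simp
    · simp [hij.ne', not_lt_of_gt hij, a.2 (show id j < id i from hij)]
  right_inv p := by
    refine Prod.ext (Subtype.ext ?_) (funext fun i => by simp)
    ext i j
    by_cases hij : i < j
    · simp [hij, hij.ne]
    · simp [hij, p.1.2 i j (not_lt.mp hij)]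

def cayleyIsoTargetGraph (F : Type) [Field F] (n : ℕ) [NeZero n] :
    cayley F n ≃g targetGraph F n :=
  ⟨splitDiagEquiv F n, (cayley_adj_iff_s14 _ _).symm⟩

theorem stmt14_general (F : Type) [Field F]
    (n : ℕ) [NeZero n] :
    ∃ φ : upperTri F n → strictUpper F n × (Fin n → F),
      (∀ a : upperTri F n,
        φ a =
          (⟨fun i j => if i < j then (a : Matrix (Fin n) (Fin n) F) i j else 0,
              fun i j hji => if_neg (fun hij => absurd hij (not_lt.mpr hji))⟩,
           fun i => (a : Matrix (Fin n) (Fin n) F) i i)) ∧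
      Function.Bijective φ ∧
      ∀ a b : upperTri F n,
        (cayley F n).Adj a b ↔ (targetGraph F n).Adj (φ a) (φ b) :=
  ⟨cayleyIsoTargetGraph F n, fun _ => rfl, (cayleyIsoTargetGraph F n).bijective,
    fun _ _ => (cayleyIsoTargetGraph F n).map_adj_iff.symm⟩

/-- For `|F| > 2`, the map sending an upper triangular matrix to the pair
(strictly upper triangular part, diagonal vector) is a graph isomorphism from
`C_{T_n(F)}` onto the graph `targetGraph F n`. -/
theorem stmt14 (F : Type) [Field F] [Fintype F] (hF : 2 < Fintype.card F)
    (n : ℕ) [NeZero n] :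
    ∃ φ : upperTri F n → strictUpper F n × (Fin n → F),
      (∀ a : upperTri F n,
        φ a =
          (⟨fun i j => if i < j then (a : Matrix (Fin n) (Fin n) F) i j else 0,
              fun i j hji => if_neg (fun hij => absurd hij (not_lt.mpr hji))⟩,
           fun i => (a : Matrix (Fin n) (Fin n) F) i i)) ∧
      Function.Bijective φ ∧
      ∀ a b : upperTri F n,
        (cayley F n).Adj a b ↔ (targetGraph F n).Adj (φ a) (φ b) :=
  stmt14_general F n
end
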